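/- arXiv:1106.4735 — 2 statements merged into one kernel-verified Lean document; each statement's English description precedes it below -/
import Mathlib

section
/- Suppose U is an idempotent ultrafilter on (ℕ,+) and 𝔸_U contains an idempotent (some μ with μˆμ = μ). Then there exist idempotents μ_r ∈ 𝔸_U for each r ∈ 2^ℕ and sets E_r ⊆ 𝕋 for each r ∈ 2^ℕ such that μ_r(E_s) = 1 if r = s and μ_r(E_s) = 0 if r ≠ s. In particular, the set of idempotents in 𝔸_U is either empty or is not weak*-closed. -/
open scoped Classical

/-- The free binary system (free magma) on one generator. -/
abbrev 𝕋 : Type := FreeMagma Unit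

/-- The generator `1` of `𝕋`. -/
def e1 : 𝕋 := FreeMagma.of ()

/-- `#(t)`: the number of occurrences of the generator in `t`. -/
def cnt : 𝕋 → ℕ
  | FreeMagma.of _ => 1
  | FreeMagma.mul a b => cnt a + cnt b

/-- The space `ℓ^∞(S)` of bounded real-valued functions on `S`. -/
def Bdd (S : Type*) : Type _ := {f : S → ℝ // ∃ M, ∀ s, |f s| ≤ M}

/-- Package a function as an element of `Bdd S` (junk value if unbounded). -/
noncomputable def liftBdd {S : Type*} (g : S → ℝ) : Bdd S :=
  if h : ∃ M, ∀ s, |g s| ≤ M then ⟨g, h⟩ else ⟨fun _ => 0, 0, fun _ => by simp⟩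

/-- The constant function as an element of `Bdd S`. -/
def constB (S : Type*) (c : ℝ) : Bdd S := ⟨fun _ => c, |c|, fun _ => le_rfl⟩

/-- The characteristic function of `E` as an element of `Bdd S`. -/
noncomputable def indB {S : Type*} (E : Set S) : Bdd S :=
  liftBdd (fun s => if s ∈ E then 1 else 0)

/-- `Pr S`: finitely additive probability measures on `S`, identified with the
positive normalized linear functionals on `ℓ^∞(S)`.  The weak* topology is the
subspace topology inherited from the product topology on `Bdd S → ℝ`. -/
def PrSet (S : Type*) : Set (Bdd S → ℝ) :=
  {φ | (∀ f g h : Bdd S, (∀ s, h.1 s = f.1 s + g.1 s) → φ h = φ f + φ g) ∧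
       (∀ (c : ℝ) (f g : Bdd S), (∀ s, g.1 s = c * f.1 s) → φ g = c * φ f) ∧
       (∀ f : Bdd S, (∀ s, 0 ≤ f.1 s) → 0 ≤ φ f) ∧
       φ (constB S 1) = 1}

/-- `μ(E)`: the measure of a set `E ⊆ S`. -/
noncomputable def mE {S : Type*} (φ : Bdd S → ℝ) (E : Set S) : ℝ := φ (indB E)

/-- The product `μ ⊗ ν` of finitely additive measures:
`μ⊗ν(f) = μ(x ↦ ν(y ↦ f(x,y)))`. -/
noncomputable def prodM {S T : Type*} (φ : Bdd S → ℝ) (ψ : Bdd T → ℝ) :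
    Bdd (S × T) → ℝ :=
  fun f => φ (liftBdd fun x => ψ (liftBdd fun y => f.1 (x, y)))

/-- The extension of a binary operation `op` on `S` to `Pr S`:
`μ⋆ν(f) = μ(x ↦ ν(y ↦ f(x ⋆ y)))`. -/
noncomputable def starM {S : Type*} (op : S → S → S) (φ ψ : Bdd S → ℝ) :
    Bdd S → ℝ :=
  fun f => φ (liftBdd fun x => ψ (liftBdd fun y => f.1 (op x y)))

/-- The extension of `ˆ` to `Pr 𝕋`. -/
noncomputable def hmul (φ ψ : Bdd 𝕋 → ℝ) : Bdd 𝕋 → ℝ := starM (· * ·) φ ψ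

/-- Finitely supported probability measures: finite convex combinations of
point evaluations. -/
def FinSuppPr (S : Type*) : Set (Bdd S → ℝ) :=
  {φ | ∃ (F : Finset S) (w : S → ℝ), (∀ s ∈ F, 0 ≤ w s) ∧ (∑ s ∈ F, w s) = 1 ∧
      ∀ f : Bdd S, φ f = ∑ s ∈ F, w s * f.1 s}

/-- `𝔸_n`: finitely supported probability measures concentrated on `𝕋_n`. -/
def Asets (n : ℕ) : Set (Bdd 𝕋 → ℝ) :=
  {φ | ∃ (F : Finset 𝕋) (w : 𝕋 → ℝ), (∀ t ∈ F, cnt t = n) ∧ (∀ t ∈ F, 0 ≤ w t) ∧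
      (∑ t ∈ F, w t) = 1 ∧ ∀ f : Bdd 𝕋, φ f = ∑ t ∈ F, w t * f.1 t}

/-- The extension of `+` on `ℕ` to ultrafilters: `A ∈ U+V` iff
`{m : {n : m+n ∈ A} ∈ V} ∈ U`. -/
noncomputable def addU (U V : Ultrafilter ℕ) : Ultrafilter ℕ :=
  U.bind fun m => V.map fun n => m + n

/-- `𝔸_U`: the `U`-limit of the sets `𝔸_m`. -/
def AU (U : Ultrafilter ℕ) : Set (Bdd 𝕋 → ℝ) :=
  {μ | μ ∈ PrSet 𝕋 ∧ ∀ W : Set (Bdd 𝕋 → ℝ), IsOpen W → μ ∈ W →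
      {m : ℕ | (W ∩ Asets m).Nonempty} ∈ U}

/-- The extension of `ˆ` to ultrafilters on `𝕋`: `E ∈ UˆV` iff
`{u : {v : uˆv ∈ E} ∈ V} ∈ U`. -/
noncomputable def umul (U V : Ultrafilter 𝕋) : Ultrafilter 𝕋 :=
  U.bind fun u => V.map fun v => u * v

/-- Substitution of measures into a term `t`:
`t(μ_0,…,μ_{m-1})(f)` is the nested integral
`μ_0(x_0 ↦ ⋯ μ_{m-1}(x_{m-1} ↦ f(t(x⃗)))⋯)`. -/
noncomputable def substM : 𝕋 → List (Bdd 𝕋 → ℝ) → (Bdd 𝕋 → ℝ)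
  | FreeMagma.of _, μs => μs.headI
  | FreeMagma.mul a b, μs =>
      hmul (substM a (μs.take (cnt a))) (substM b (μs.drop (cnt a)))

/-- `t_k`: iteratively remove the carets of `t` involving only leaves of index
greater than `k`. -/
def tk : 𝕋 → ℕ → 𝕋
  | FreeMagma.of _, _ => e1
  | FreeMagma.mul a b, k => if k < cnt a then tk a k * e1 else a * tk b (k - cnt a)

/-- `l_k(t) = #(t_k) - 2` (truncated subtraction). -/
def lk (t : 𝕋) (k : ℕ) : ℕ := cnt (tk t k) - 2

/-- The subterm `t/σ` of `t` at address `σ` (`false` = left/`0`, `true` = right/`1`). -/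
def subT : 𝕋 → List Bool → Option 𝕋
  | t, [] => some t
  | FreeMagma.of _, _ :: _ => none
  | FreeMagma.mul a b, c :: σ => if c then subT b σ else subT a σ

/-- `σ <_lex ς` for incompatible binary sequences: at the first coordinate where
they differ, `σ` has `0` and `ς` has `1`. -/
def lexLT (σ ς : List Bool) : Prop :=
  ∃ p σ' ς', σ = p ++ (false :: σ') ∧ ς = p ++ (true :: ς')

/-- `x₀·E`. -/
def x0E (E : Set 𝕋) : Set 𝕋 :=
  {x | ∃ a b c : 𝕋, x = a * (b * c) ∧ (a * b) * c ∈ E}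

/-- `x₁·E`. -/
def x1E (E : Set 𝕋) : Set 𝕋 :=
  {x | ∃ s a b c : 𝕋, x = s * (a * (b * c)) ∧ s * ((a * b) * c) ∈ E}

/-- `u_σ` for a nonempty finite binary sequence `σ`. -/
def uSeq : List Bool → 𝕋
  | [] => e1
  | [_] => e1
  | b :: σ => if b then e1 * uSeq σ else uSeq σ * e1

/-- `a ≪ b`: for some `p`, `#(a) < 2^p` and `2^p` divides `#(b)`. -/
def ll (a b : 𝕋) : Prop := ∃ p : ℕ, cnt a < 2 ^ p ∧ 2 ^ p ∣ cnt b

/-- `r↾n`: the first `n` values of `r` as a finite binary sequence. -/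
def rList (r : ℕ → Bool) (n : ℕ) : List Bool := (List.range n).map r

/-- The map `h_r : 𝕋 → 𝕋`. -/
noncomputable def hr (r : ℕ → Bool) : 𝕋 → 𝕋
  | FreeMagma.of _ => uSeq (rList r 1)
  | FreeMagma.mul a b =>
      if ll a b then hr r a * hr r b else uSeq (rList r (cnt a + cnt b))

/-- The action of `h_r` on measures: `h_r(μ)(f) = μ(f ∘ h_r)`. -/
noncomputable def hrM (r : ℕ → Bool) (φ : Bdd 𝕋 → ℝ) : Bdd 𝕋 → ℝ :=
  fun f => φ (liftBdd fun t => f.1 (hr r t))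

/-- `lev`: `l(1) = 0`, `l(aˆb) = l(a) + 1`. -/
def lev : 𝕋 → ℕ
  | FreeMagma.of _ => 0
  | FreeMagma.mul a _ => lev a + 1

/-- `C` is closed under `ˆ`. -/
def HClosed (C : Set (Bdd 𝕋 → ℝ)) : Prop := ∀ μ ∈ C, ∀ ν ∈ C, hmul μ ν ∈ C

/-!
Every `μ ∈ 𝔸_U` is concentrated on terms whose size is divisible by any given power of `2`,
since an idempotent `U` contains every `2^q ℕ`. The size-preserving map `h_r` is multiplicative
on pairs `a ≪ b`, so `μ_r := h_r(μ)` is again an idempotent of `𝔸_U`. It rewrites the last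
`≪`-block of a term into a code of an initial segment of `r`; hence `μ_r` is concentrated on the
set `E_r` of terms whose last block is coded by `r`, and these sets separate the `μ_r`.

If the idempotents of `𝔸_U` formed a closed set, the limit `ν` of `μ_{ρ_j}`, for unit vectors
`ρ_j → 0`, would be one of them. Each `μ_r` gives full measure to the set `D` of products
`a ˆ b`, `a ≪ b`, of two terms coded by a common `r`, hence so does `ν`; but idempotence of `ν`
gives `ν(D) = ν(E_0) = lim μ_{ρ_j}(E_0) = 0`.
-/

open Filter Topology

section FinitelyAdditive

variable {S T : Type*} {φ : Bdd S → ℝ}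

lemma liftBdd_val {g : S → ℝ} (hg : ∃ M, ∀ s, |g s| ≤ M) : (liftBdd g).1 = g := by
  have e : liftBdd g = ⟨g, hg⟩ := dif_pos hg
  rw [e]

lemma liftBdd_comp_val (f : Bdd T) (h : S → T) :
    (liftBdd fun s => f.1 (h s)).1 = fun s => f.1 (h s) :=
  liftBdd_val (f.2.imp fun _ hM _ => hM _)

lemma indB_apply (E : Set S) (s : S) : (indB E).1 s = if s ∈ E then 1 else 0 := by
  rw [indB, liftBdd_val ⟨1, fun s => by split_ifs <;> norm_num⟩]

lemma abs_indB_apply_le (E : Set S) (s : S) : |(indB E).1 s| ≤ 1 := by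
  rw [indB_apply]; split_ifs <;> norm_num

lemma pr_mono (hφ : φ ∈ PrSet S) {f g : Bdd S} (h : ∀ s, f.1 s ≤ g.1 s) : φ f ≤ φ g := by
  obtain ⟨M, hM⟩ := f.2
  obtain ⟨N, hN⟩ := g.2
  let d : Bdd S := ⟨fun s => g.1 s - f.1 s, N + M, fun s =>
    (abs_sub _ _).trans (add_le_add (hN s) (hM s))⟩
  have hsum : φ g = φ f + φ d := hφ.1 f d g fun s => by simp [d]
  have hd : 0 ≤ φ d := hφ.2.2.1 d fun s => sub_nonneg.2 (h s)
  linarith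

lemma pr_constB (hφ : φ ∈ PrSet S) (c : ℝ) : φ (constB S c) = c := by
  rw [hφ.2.1 c (constB S 1) (constB S c) fun _ => (mul_one c).symm, hφ.2.2.2, mul_one]

lemma pr_abs_le (hφ : φ ∈ PrSet S) {f : Bdd S} {M : ℝ} (h : ∀ s, |f.1 s| ≤ M) :
    |φ f| ≤ M := by
  have lower := pr_mono hφ (f := constB S (-M)) fun s => neg_le_of_abs_le (h s)
  have upper := pr_mono hφ (g := constB S M) fun s => le_of_abs_le (h s)
  rw [pr_constB hφ] at lower upper
  exact abs_le.2 ⟨lower, upper⟩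

lemma mE_compl (hφ : φ ∈ PrSet S) (A : Set S) : mE φ Aᶜ = 1 - mE φ A := by
  have h := hφ.1 (indB A) (indB Aᶜ) (constB S 1) fun s => by
    by_cases hs : s ∈ A <;> simp [indB_apply, constB, hs]
  rw [pr_constB hφ] at h
  rw [mE, mE]
  linarith

lemma mE_le_one (hφ : φ ∈ PrSet S) (A : Set S) : mE φ A ≤ 1 := by
  have h := mE_compl hφ A
  have : 0 ≤ mE φ Aᶜ := hφ.2.2.1 _ fun s => by rw [indB_apply]; split_ifs <;> norm_num
  linarith

lemma mE_eq_one_of_subset (hφ : φ ∈ PrSet S) {A B : Set S} (hA : mE φ A = 1)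
    (hAB : A ⊆ B) : mE φ B = 1 := by
  refine le_antisymm (mE_le_one hφ B) (hA ▸ pr_mono hφ fun s => ?_)
  rw [indB_apply, indB_apply]
  split_ifs with hsA hsB
  exacts [le_rfl, absurd (hAB hsA) hsB, zero_le_one, le_rfl]

lemma pr_le_of_le_on (hφ : φ ∈ PrSet S) {A : Set S} (hA : mE φ A = 1) {f g : Bdd S}
    (h : ∀ s ∈ A, f.1 s ≤ g.1 s) : φ f ≤ φ g := by
  obtain ⟨M, hM⟩ := f.2
  obtain ⟨N, hN⟩ := g.2
  -- `g + (M + N) 1_{Aᶜ}` dominates `f` everywhere, and its integral is that of `g`.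
  have hw : ∀ s, |(M + N) * (indB Aᶜ).1 s| ≤ |M + N| := fun s => by
    rw [abs_mul]; exact mul_le_of_le_one_right (abs_nonneg _) (abs_indB_apply_le _ _)
  let w : Bdd S := ⟨fun s => (M + N) * (indB Aᶜ).1 s, _, hw⟩
  let u : Bdd S := ⟨fun s => g.1 s + w.1 s, N + |M + N|, fun s =>
    (abs_add_le _ _).trans (add_le_add (hN s) (hw s))⟩
  have hw0 : φ w = 0 := by
    rw [hφ.2.1 _ _ w fun _ => rfl]
    show (M + N) * mE φ Aᶜ = 0
    rw [mE_compl hφ, hA, sub_self, mul_zero]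
  have hu : φ u = φ g := by rw [hφ.1 g w u fun _ => rfl, hw0, add_zero]
  refine hu ▸ pr_mono hφ fun s => ?_
  show f.1 s ≤ g.1 s + (M + N) * (indB Aᶜ).1 s
  by_cases hs : s ∈ A
  · simpa [indB_apply, hs] using h s hs
  · have := abs_le.1 (hM s)
    have := abs_le.1 (hN s)
    simp only [indB_apply, Set.mem_compl_iff, hs, not_false_eq_true, if_true]
    linarith

lemma pr_congr_on (hφ : φ ∈ PrSet S) {A : Set S} (hA : mE φ A = 1) {f g : Bdd S}
    (h : ∀ s ∈ A, f.1 s = g.1 s) : φ f = φ g :=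
  le_antisymm (pr_le_of_le_on hφ hA fun s hs => (h s hs).le)
    (pr_le_of_le_on hφ hA fun s hs => (h s hs).ge)

lemma pr_liftBdd_congr_on (hφ : φ ∈ PrSet S) {A : Set S} (hA : mE φ A = 1) {g₁ g₂ : S → ℝ}
    (hg₁ : ∃ M, ∀ s, |g₁ s| ≤ M) (hg₂ : ∃ M, ∀ s, |g₂ s| ≤ M) (h : Set.EqOn g₁ g₂ A) :
    φ (liftBdd g₁) = φ (liftBdd g₂) :=
  pr_congr_on hφ hA fun s hs => by rw [liftBdd_val hg₁, liftBdd_val hg₂]; exact h hs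

lemma pr_liftBdd_eq_const_on (hφ : φ ∈ PrSet S) {A : Set S} (hA : mE φ A = 1) {g : S → ℝ}
    (hg : ∃ M, ∀ s, |g s| ≤ M) {c : ℝ} (h : ∀ s ∈ A, g s = c) : φ (liftBdd g) = c := by
  rw [← pr_constB hφ c]
  exact pr_congr_on hφ hA fun s hs => by rw [liftBdd_val hg]; exact h s hs

lemma mE_inter_eq_one (hφ : φ ∈ PrSet S) {A B : Set S} (hA : mE φ A = 1) (hB : mE φ B = 1) :
    mE φ (A ∩ B) = 1 :=
  hB ▸ pr_congr_on hφ hA fun s hs => by simp [indB_apply, hs]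

end FinitelyAdditive

section IdempotentUltrafilter

variable {U : Ultrafilter ℕ}

lemma mem_addU {V : Ultrafilter ℕ} {A : Set ℕ} :
    A ∈ addU U V ↔ {m | {n | m + n ∈ A} ∈ V} ∈ U := by
  change A ∈ Filter.bind (↑U) (fun m => ↑(V.map fun n => m + n)) ↔ _
  rw [Filter.mem_bind']
  rfl

lemma dvd_mem_of_addU_self (hU : addU U U = U) (n : ℕ) [NeZero n] : {j | n ∣ j} ∈ U := by
  obtain ⟨c, hc⟩ := (U.map ((↑) : ℕ → ZMod n)).eq_pure_of_finite
  have hA : {j : ℕ | (j : ZMod n) = c} ∈ U := by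
    change (↑) ⁻¹' {c} ∈ U
    rw [← Ultrafilter.mem_map, hc]; exact rfl
  have hAA : {j : ℕ | (j : ZMod n) = c} ∈ addU U U := by rwa [hU]
  rw [mem_addU] at hAA
  obtain ⟨m, hm, hmA⟩ := Ultrafilter.nonempty_of_mem (U.inter_mem hA hAA)
  obtain ⟨k, hk, hmk⟩ := Ultrafilter.nonempty_of_mem (U.inter_mem hA hmA)
  -- idempotence forces the residue class `c` of `U` to satisfy `c + c = c`
  have hc0 : c = 0 := by
    have hmk' : (m : ZMod n) + k = c := by simpa using hmk
    rw [hm, hk] at hmk'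
    simpa using hmk'
  simpa [hc0, ZMod.natCast_eq_zero_iff] using hA

end IdempotentUltrafilter

/-- The pushforward along `h`; `hrM r` is `mapM (hr r)`. -/
noncomputable def mapM {S T : Type*} (h : S → T) (φ : Bdd S → ℝ) : Bdd T → ℝ :=
  fun f => φ (liftBdd fun s => f.1 (h s))

section Pushforward

variable {S T : Type*} {φ : Bdd S → ℝ}

lemma mapM_mem_PrSet (h : S → T) (hφ : φ ∈ PrSet S) : mapM h φ ∈ PrSet T := by
  refine ⟨fun f g k hk => ?_, fun c f g hg => ?_, fun f hf => ?_, ?_⟩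
  · exact hφ.1 _ _ _ fun s => by simp only [liftBdd_comp_val]; exact hk (h s)
  · exact hφ.2.1 c _ _ fun s => by simp only [liftBdd_comp_val]; exact hg (h s)
  · exact hφ.2.2.1 _ fun s => by simp only [liftBdd_comp_val]; exact hf (h s)
  · exact (congrArg φ (Subtype.ext (liftBdd_comp_val (constB T 1) h))).trans hφ.2.2.2

lemma mE_mapM (h : S → T) (E : Set T) : mE (mapM h φ) E = mE φ (h ⁻¹' E) := by
  refine congrArg φ (congrArg liftBdd (funext fun s => ?_))
  rw [indB_apply]
  rfl

lemma continuous_mapM (h : S → T) : Continuous (mapM h) :=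
  continuous_pi fun _ => continuous_apply _

lemma starM_mapM_self {opS : S → S → S} {opT : T → T → T} {h : S → T} (hφ : φ ∈ PrSet S)
    (hh : ∀ x, mE φ {y | h (opS x y) = opT (h x) (h y)} = 1) :
    starM opT (mapM h φ) (mapM h φ) = mapM h (starM opS φ φ) := by
  funext f
  obtain ⟨M, hM⟩ := f.2
  have hinner : ∀ x, |φ (liftBdd fun u => f.1 (opT x (h u)))| ≤ M := fun x =>
    pr_abs_le hφ fun u => by rw [liftBdd_comp_val]; exact hM _
  simp only [starM, mapM, liftBdd_comp_val]
  rw [liftBdd_val ⟨M, hinner⟩]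
  refine congrArg φ (congrArg liftBdd (funext fun x => ?_))
  exact pr_liftBdd_congr_on hφ (hh x) ⟨M, fun _ => hM _⟩ ⟨M, fun _ => hM _⟩
    fun y (hy : h (opS x y) = _) => by rw [hy]

end Pushforward

section LimitOfAsets

variable {U : Ultrafilter ℕ} {μ : Bdd 𝕋 → ℝ}

lemma mapM_mem_Asets {h : 𝕋 → 𝕋} (hcnt : ∀ t, cnt (h t) = cnt t) {ψ : Bdd 𝕋 → ℝ} {m : ℕ}
    (hψ : ψ ∈ Asets m) : mapM h ψ ∈ Asets m := by
  obtain ⟨F, w, hF, hw0, hw1, hψf⟩ := hψ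
  let w' : 𝕋 → ℝ := fun u => ∑ t ∈ F with h t = u, w t
  have hfibre : ∀ g : 𝕋 → ℝ, ∑ u ∈ F.image h, w' u * g u = ∑ t ∈ F, w t * g (h t) :=
    fun g => Finset.sum_image' _ fun t _ => by
      rw [Finset.sum_mul]
      exact Finset.sum_congr rfl fun j hj => by rw [(Finset.mem_filter.1 hj).2]
  refine ⟨F.image h, w', ?_, fun u _ => Finset.sum_nonneg fun t ht => hw0 t
    (Finset.mem_filter.1 ht).1, ?_, fun f => ?_⟩
  · simp only [Finset.mem_image]
    rintro _ ⟨t, ht, rfl⟩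
    rw [hcnt, hF t ht]
  · simpa [hw1] using hfibre 1
  · rw [hfibre f.1]
    simp only [mapM, hψf, liftBdd_comp_val]

lemma mapM_mem_AU {h : 𝕋 → 𝕋} (hcnt : ∀ t, cnt (h t) = cnt t) (hμ : μ ∈ AU U) :
    mapM h μ ∈ AU U := by
  refine ⟨mapM_mem_PrSet h hμ.1, fun W hW hμW => ?_⟩
  filter_upwards [hμ.2 _ (hW.preimage (continuous_mapM h)) hμW]
  rintro m ⟨ψ, hψW, hψ⟩
  exact ⟨mapM h ψ, hψW, mapM_mem_Asets hcnt hψ⟩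

lemma mE_cnt_mem_of_mem_AU (hμ : μ ∈ AU U) {A : Set ℕ} (hA : A ∈ U) :
    mE μ {t | cnt t ∈ A} = 1 := by
  by_contra hne
  let W : Set (Bdd 𝕋 → ℝ) := {ψ | mE ψ {t | cnt t ∈ A} ≠ 1}
  have hW : IsOpen W := isOpen_ne_fun (continuous_apply _) continuous_const
  obtain ⟨m, ⟨ψ, hψW, F, w, hF, -, hw1, hψf⟩, hm⟩ :=
    Ultrafilter.nonempty_of_mem (U.inter_mem (hμ.2 W hW hne) hA)
  refine hψW ?_
  rw [mE, hψf, ← hw1]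
  refine Finset.sum_congr rfl fun t ht => ?_
  have : cnt t ∈ A := (hF t ht).symm ▸ hm
  simp [indB_apply, this]

lemma mE_pow_dvd_cnt (hU : addU U U = U) (hμ : μ ∈ AU U) (q : ℕ) :
    mE μ {t | 2 ^ q ∣ cnt t} = 1 :=
  mE_cnt_mem_of_mem_AU hμ (dvd_mem_of_addU_self hU (2 ^ q))

end LimitOfAsets

section Terms

lemma cnt_pos : ∀ t : 𝕋, 0 < cnt t
  | FreeMagma.of _ => Nat.one_pos
  | FreeMagma.mul a _ => Nat.add_pos_left (cnt_pos a) _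

lemma cnt_mul (a b : 𝕋) : cnt (a * b) = cnt a + cnt b := rfl

lemma cnt_e1 : cnt e1 = 1 := rfl

lemma uSeq_cons_cons (b c : Bool) (σ : List Bool) :
    uSeq (b :: c :: σ) = if b then e1 * uSeq (c :: σ) else uSeq (c :: σ) * e1 := rfl

lemma cnt_uSeq : ∀ σ : List Bool, σ ≠ [] → cnt (uSeq σ) = σ.length
  | [_], _ => rfl
  | b :: c :: σ, _ => by
    have ih := cnt_uSeq (c :: σ) (List.cons_ne_nil _ _)
    cases b <;> simp [uSeq_cons_cons, cnt_mul, cnt_e1, ih, add_comm]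

lemma length_rList (r : ℕ → Bool) (n : ℕ) : (rList r n).length = n := by
  simp [rList]

lemma cnt_uSeq_rList (r : ℕ → Bool) {n : ℕ} (hn : 0 < n) : cnt (uSeq (rList r n)) = n := by
  rw [cnt_uSeq _ (List.ne_nil_of_length_pos ((length_rList r n).symm ▸ hn)), length_rList]

/-- A left inverse of `uSeq` up to the last two bits, which `uSeq` forgets:
`uSeq [b, c] = e1 * e1` for all `b`, `c`. -/
def uDecode : 𝕋 → List Bool
  | FreeMagma.of _ => []
  | FreeMagma.mul a b => if a = e1 then true :: uDecode b else false :: uDecode a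

lemma uDecode_uSeq : ∀ σ : List Bool, 2 ≤ σ.length →
    uDecode (uSeq σ) = σ.take (σ.length - 2) ++ [true]
  | [_, _], _ => by simp only [uSeq_cons_cons]; split_ifs <;> rfl
  | b :: c :: d :: σ, _ => by
    have ih := uDecode_uSeq (c :: d :: σ) (by simp)
    have hne : uSeq (c :: d :: σ) ≠ e1 := fun h => by
      simpa [h, cnt_e1] using cnt_uSeq (c :: d :: σ) (List.cons_ne_nil _ _)
    rw [uSeq_cons_cons]
    cases b
    · simp only [Bool.false_eq_true, if_false]
      show (if uSeq (c :: d :: σ) = e1 then _ else _) = _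
      simp [hne, ih]
    · simp only [if_true]
      show (if e1 = e1 then _ else _) = _
      simp [ih]

lemma eq_of_uSeq_rList_eq {r s : ℕ → Bool} {L : ℕ}
    (h : uSeq (rList r L) = uSeq (rList s L)) {k : ℕ} (hk : k + 2 < L) : r k = s k := by
  have hd := congrArg uDecode h
  rw [uDecode_uSeq _ (by rw [length_rList]; omega), uDecode_uSeq _ (by rw [length_rList]; omega),
    List.append_cancel_right_eq] at hd
  simp only [rList, ← List.map_take, List.take_range, List.length_map, List.length_range] at hd
  exact List.map_inj_left.1 hd k (List.mem_range.2 (by omega))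

end Terms

section Blocks

lemma two_dvd_cnt_of_ll {a b : 𝕋} (h : ll a b) : 2 ∣ cnt b := by
  obtain ⟨p, hap, hpb⟩ := h
  have hp : p ≠ 0 := by
    rintro rfl
    have := cnt_pos a
    simp at hap
    omega
  exact (dvd_pow_self 2 hp).trans hpb

lemma ll_of_pow_dvd {x y : 𝕋} {q : ℕ} (hq : cnt x ≤ q) (h : 2 ^ q ∣ cnt y) : ll x y :=
  ⟨q, hq.trans_lt Nat.lt_two_pow_self, h⟩

lemma cnt_hr (r : ℕ → Bool) : ∀ t : 𝕋, cnt (hr r t) = cnt t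
  | FreeMagma.of _ => rfl
  | FreeMagma.mul a b => by
    by_cases hab : ll a b
    · simp [hr, hab, cnt_mul, cnt_hr r a, cnt_hr r b]
    · simp only [hr, hab, if_false]
      exact cnt_uSeq_rList r (Nat.add_pos_left (cnt_pos a) _)

lemma hr_mul_of_ll (r : ℕ → Bool) {x y : 𝕋} (h : ll x y) : hr r (x * y) = hr r x * hr r y := by
  show hr r (FreeMagma.mul x y) = _
  simp [hr, h]

/-- The last factor `b` of the decomposition `t = a₁ˆ(a₂ˆ(⋯ˆ(aₖˆb)))` with `aᵢ ≪` the
rest. For even `#t` the tail block of `hr r t` is `uSeq (r↾#b)`: this is how `μ_r`-typical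
terms remember `r`. -/
noncomputable def tailBlock : 𝕋 → 𝕋
  | FreeMagma.of _ => e1
  | FreeMagma.mul a b => if ll a b then tailBlock b else a * b

lemma tailBlock_mul (a b : 𝕋) : tailBlock (a * b) = if ll a b then tailBlock b else a * b := rfl

lemma pow_dvd_cnt_tailBlock {q : ℕ} : ∀ t : 𝕋, 2 ^ q ∣ cnt t → 2 ^ q ∣ cnt (tailBlock t)
  | FreeMagma.of _, h => h
  | FreeMagma.mul a b, h => by
    by_cases hab : ll a b
    · obtain ⟨p, hap, hpb⟩ := hab
      have hqb : 2 ^ q ∣ cnt b := by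
        rcases le_or_gt q p with hqp | hpq
        · exact (pow_dvd_pow 2 hqp).trans hpb
        · -- otherwise `2 ^ p` would divide `cnt a < 2 ^ p`
          have hpa : 2 ^ p ∣ cnt a := (Nat.dvd_add_left hpb).1 ((pow_dvd_pow 2 hpq.le).trans h)
          exact absurd (Nat.le_of_dvd (cnt_pos a) hpa) (not_le.2 hap)
      rw [show FreeMagma.mul a b = a * b from rfl, tailBlock_mul, if_pos ⟨p, hap, hpb⟩]
      exact pow_dvd_cnt_tailBlock b hqb
    · rwa [show FreeMagma.mul a b = a * b from rfl, tailBlock_mul, if_neg hab]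

lemma lt_cnt_tailBlock {q : ℕ} {t : 𝕋} (h : 2 ^ q ∣ cnt t) : q < cnt (tailBlock t) :=
  Nat.lt_two_pow_self.trans_le (Nat.le_of_dvd (cnt_pos _) (pow_dvd_cnt_tailBlock t h))

lemma tailBlock_uSeq {σ : List Bool} (h2 : 2 ≤ σ.length) (heven : Even σ.length) :
    tailBlock (uSeq σ) = uSeq σ := by
  obtain ⟨b, c, σ, rfl⟩ : ∃ b c σ', σ = b :: c :: σ' := by
    match σ, h2 with
    | b :: c :: σ', _ => exact ⟨b, c, σ', rfl⟩
  have hodd : ¬ 2 ∣ cnt (uSeq (c :: σ)) := by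
    rw [cnt_uSeq _ (List.cons_ne_nil _ _), List.length_cons]
    rw [Nat.even_iff, List.length_cons, List.length_cons] at heven
    omega
  rw [uSeq_cons_cons]
  split_ifs
  · rw [tailBlock_mul, if_neg fun h => hodd (two_dvd_cnt_of_ll h)]
  · rw [tailBlock_mul, if_neg fun h => absurd (two_dvd_cnt_of_ll h) (by decide)]

lemma tailBlock_hr (r : ℕ → Bool) :
    ∀ t : 𝕋, 2 ∣ cnt t → tailBlock (hr r t) = uSeq (rList r (cnt (tailBlock t)))
  | FreeMagma.of _, h => absurd h (by norm_num [cnt])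
  | FreeMagma.mul a b, h => by
    by_cases hab : ll a b
    · have hr_ab : hr r (FreeMagma.mul a b) = hr r a * hr r b := hr_mul_of_ll r hab
      have hll : ll (hr r a) (hr r b) := by
        obtain ⟨p, hap, hpb⟩ := hab
        exact ⟨p, by rwa [cnt_hr], by rwa [cnt_hr]⟩
      rw [hr_ab, tailBlock_mul, if_pos hll, tailBlock_hr r b (two_dvd_cnt_of_ll hab),
        show FreeMagma.mul a b = a * b from rfl, tailBlock_mul, if_pos hab]
    · have hr_ab : hr r (FreeMagma.mul a b) = uSeq (rList r (cnt a + cnt b)) := by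
        simp [hr, hab]
      have h2 : 2 ≤ cnt a + cnt b := Nat.add_le_add (cnt_pos a) (cnt_pos b)
      rw [hr_ab, tailBlock_uSeq (by rwa [length_rList]) (by rwa [length_rList, even_iff_two_dvd]),
        show FreeMagma.mul a b = a * b from rfl, tailBlock_mul, if_neg hab, cnt_mul]

end Blocks

/-- The paper's `E_r`: terms whose tail block is coded by `r`. -/
noncomputable def ESet (r : ℕ → Bool) : Set 𝕋 :=
  {u | tailBlock u = uSeq (rList r (cnt (tailBlock u)))}

def DSet : Set 𝕋 :=
  {u | ∃ a b : 𝕋, u = a * b ∧ ll a b ∧ ∃ r : ℕ → Bool, a ∈ ESet r ∧ b ∈ ESet r}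

section CodedSets

lemma mem_ESet_congr {x : 𝕋} {r s : ℕ → Bool} (h : ∀ i < cnt (tailBlock x), r i = s i) :
    x ∈ ESet r ↔ x ∈ ESet s := by
  show _ = uSeq (List.map r _) ↔ _ = uSeq (List.map s _)
  rw [List.map_congr_left fun i hi => h i (List.mem_range.1 hi)]

lemma eq_of_mem_ESet {y : 𝕋} {r s : ℕ → Bool} (hr : y ∈ ESet r) (hs : y ∈ ESet s) {k : ℕ}
    (hk : k + 2 < cnt (tailBlock y)) : r k = s k :=
  eq_of_uSeq_rList_eq (hr.symm.trans hs) hk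

lemma cnt_tailBlock_hr (r : ℕ → Bool) {t : 𝕋} (h : 2 ∣ cnt t) :
    cnt (tailBlock (hr r t)) = cnt (tailBlock t) := by
  rw [tailBlock_hr r t h, cnt_uSeq_rList r (cnt_pos _)]

lemma hr_mem_ESet (r : ℕ → Bool) {t : 𝕋} (h : 2 ∣ cnt t) : hr r t ∈ ESet r := by
  show _ = _
  rw [cnt_tailBlock_hr r h, tailBlock_hr r t h]

lemma hr_not_mem_ESet {r s : ℕ → Bool} {k : ℕ} (hk : r k ≠ s k) {t : 𝕋}
    (ht : 2 ^ (k + 2) ∣ cnt t) : hr r t ∉ ESet s := fun hs =>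
  have h2 : 2 ∣ cnt t := (dvd_pow_self 2 (by omega)).trans ht
  hk <| eq_of_mem_ESet (hr_mem_ESet r h2) hs <| by
    rw [cnt_tailBlock_hr r h2]; exact lt_cnt_tailBlock ht

lemma mem_ESet_of_mul_mem_DSet {x y : 𝕋} {s : ℕ → Bool} (hxy : x * y ∈ DSet)
    (hy : y ∈ ESet s) (hlen : cnt (tailBlock x) + 2 < cnt (tailBlock y)) : x ∈ ESet s := by
  obtain ⟨a, b, hab, -, r, ha, hb⟩ := hxy
  obtain ⟨rfl, rfl⟩ : x = a ∧ y = b := by injection hab with h₁ h₂; exact ⟨h₁, h₂⟩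
  exact (mem_ESet_congr fun i hi => eq_of_mem_ESet hb hy (by omega)).1 ha

end CodedSets

section Family

variable {U : Ultrafilter ℕ} {μ : Bdd 𝕋 → ℝ}

lemma hmul_mapM_hr_self (hU : addU U U = U) (hμ : μ ∈ AU U) (hid : hmul μ μ = μ)
    (r : ℕ → Bool) : hmul (mapM (hr r) μ) (mapM (hr r) μ) = mapM (hr r) μ := by
  refine (starM_mapM_self hμ.1 fun x => ?_).trans (congrArg (mapM (hr r)) hid)
  exact mE_eq_one_of_subset hμ.1 (mE_pow_dvd_cnt hU hμ (cnt x)) fun y hy =>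
    hr_mul_of_ll r (ll_of_pow_dvd le_rfl hy)

lemma mE_mapM_hr_ESet (hU : addU U U = U) (hμ : μ ∈ AU U) (r s : ℕ → Bool) :
    mE (mapM (hr r) μ) (ESet s) = if r = s then 1 else 0 := by
  rw [mE_mapM]
  split_ifs with hrs
  · subst hrs
    exact mE_eq_one_of_subset hμ.1 (mE_pow_dvd_cnt hU hμ 1) fun t ht =>
      hr_mem_ESet r (by simpa using ht)
  · obtain ⟨k, hk⟩ := Function.ne_iff.1 hrs
    have hc : mE μ (hr r ⁻¹' ESet s)ᶜ = 1 :=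
      mE_eq_one_of_subset hμ.1 (mE_pow_dvd_cnt hU hμ (k + 2)) fun t ht => hr_not_mem_ESet hk ht
    rw [mE_compl hμ.1] at hc
    linarith

end Family

section Slices

variable {U : Ultrafilter ℕ} {ν : Bdd 𝕋 → ℝ}

lemma mE_hmul_of_slice {ψ : Bdd 𝕋 → ℝ} {D E : Set 𝕋}
    (h : ∀ x, ψ (liftBdd fun y => (indB D).1 (x * y)) = if x ∈ E then 1 else 0) :
    mE (hmul ν ψ) D = mE ν E :=
  congrArg ν (congrArg liftBdd (funext h))

lemma slice_DSet (hU : addU U U = U) (hν : ν ∈ AU U) {s : ℕ → Bool}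
    (hνs : mE ν (ESet s) = 1) (x : 𝕋) :
    ν (liftBdd fun y => (indB DSet).1 (x * y)) = if x ∈ ESet s then 1 else 0 := by
  set q := cnt x + cnt (tailBlock x) + 2
  refine pr_liftBdd_eq_const_on hν.1 (mE_inter_eq_one hν.1 hνs (mE_pow_dvd_cnt hU hν q))
    ⟨1, fun y => abs_indB_apply_le _ _⟩ fun y ⟨hys, hyq⟩ => ?_
  rw [indB_apply]
  by_cases hx : x ∈ ESet s
  · rw [if_pos hx, if_pos ⟨x, y, rfl, ll_of_pow_dvd (by omega) hyq, s, hx, hys⟩]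
  · rw [if_neg hx, if_neg fun hxy => hx (mem_ESet_of_mul_mem_DSet hxy hys ?_)]
    have := lt_cnt_tailBlock hyq
    omega

lemma mE_DSet_of_idempotent (hU : addU U U = U) (hν : ν ∈ AU U) (hid : hmul ν ν = ν)
    {s : ℕ → Bool} (hνs : mE ν (ESet s) = 1) : mE ν DSet = 1 := by
  rw [← hid, mE_hmul_of_slice (slice_DSet hU hν hνs), hνs]

end Slices

lemma exists_tendsto_of_mem_PrSet {ι S : Type*} {G : ι → Bdd S → ℝ} (hG : ∀ j, G j ∈ PrSet S)
    (F : Ultrafilter ι) : ∃ ν, Tendsto G F (𝓝 ν) := by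
  -- `PrSet S` lies in the compact box `∏_f [-M_f, M_f]`, `M_f` a bound of `f`
  let K : Set (Bdd S → ℝ) := Set.univ.pi fun f => Set.Icc (-f.2.choose) f.2.choose
  have hGK : ∀ j, G j ∈ K := fun j f _ => abs_le.1 (pr_abs_le (hG j) f.2.choose_spec)
  obtain ⟨ν, -, hν⟩ := (isCompact_univ_pi fun _ => isCompact_Icc).ultrafilter_le_nhds
    (F.map G) (le_principal_iff.2 (Ultrafilter.mem_map.2 (univ_mem' hGK)))
  exact ⟨ν, hν⟩

lemma apply_eq_of_tendsto {ι X : Type*} {F : Filter ι} [F.NeBot] {G : ι → X → ℝ}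
    {ν : X → ℝ} (hG : Tendsto G F (𝓝 ν)) {x : X} {c : ℝ} (h : ∀ᶠ j in F, G j x = c) :
    ν x = c :=
  tendsto_nhds_unique ((continuous_apply x).continuousAt.tendsto.comp hG)
    (tendsto_const_nhds.congr' (h.mono fun _ hj => hj.symm))

lemma not_isClosed_idempotents_AU {U : Ultrafilter ℕ} (hU : addU U U = U)
    {μ : (ℕ → Bool) → Bdd 𝕋 → ℝ} (hμ : ∀ r, μ r ∈ AU U ∧ hmul (μ r) (μ r) = μ r)
    (hE : ∀ r s, mE (μ r) (ESet s) = if r = s then 1 else 0) :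
    ¬ IsClosed {ν : Bdd 𝕋 → ℝ | ν ∈ AU U ∧ hmul ν ν = ν} := by
  intro hcl
  let ρ : ℕ → ℕ → Bool := fun j i => decide (i = j)
  let F := hyperfilter ℕ
  have hF : ∀ N, ∀ᶠ j in (F : Filter ℕ), N ≤ j := fun N =>
    hyperfilter_le_cofinite (Nat.cofinite_eq_atTop ▸ eventually_ge_atTop N)
  obtain ⟨ν, hν⟩ := exists_tendsto_of_mem_PrSet (fun j => (hμ (ρ j)).1.1) F
  obtain ⟨-, hνid⟩ : ν ∈ AU U ∧ hmul ν ν = ν :=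
    hcl.mem_of_tendsto hν (Eventually.of_forall fun j => hμ (ρ j))
  have hμρ : ∀ j, mE (μ (ρ j)) (ESet (ρ j)) = 1 := fun j => by rw [hE, if_pos rfl]
  have hD : mE ν DSet = 1 := apply_eq_of_tendsto hν <| Eventually.of_forall fun j =>
    mE_DSet_of_idempotent hU (hμ _).1 (hμ _).2 (hμρ j)
  have hE₀ : mE ν (ESet fun _ => false) = 0 := apply_eq_of_tendsto hν <|
    Eventually.of_forall fun j => by
      show mE (μ (ρ j)) _ = 0
      rw [hE, if_neg fun h => by simpa [ρ] using congrFun h j]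
  have hslice : ∀ x, ν (liftBdd fun y => (indB DSet).1 (x * y)) =
      if x ∈ ESet (fun _ => false) then 1 else 0 := fun x =>
    apply_eq_of_tendsto hν <| (hF (cnt (tailBlock x))).mono fun j hj => by
      show μ (ρ j) _ = _
      rw [slice_DSet hU (hμ _).1 (hμρ j) x,
        mem_ESet_congr fun i hi => decide_eq_false (show i ≠ j by omega)]
  rw [← hνid, mE_hmul_of_slice hslice, hE₀] at hD
  exact zero_ne_one hD

/-- Proposition 6.2: if `𝔸_U` contains an idempotent, then it
contains a family `(μ_r)_{r ∈ 2^ℕ}` of idempotents with sets `E_r` such that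
`μ_r(E_s) = 1` iff `r = s` (else `0`); in particular the set of idempotents in
`𝔸_U` is not weak*-closed. -/
theorem idempotents_in_AU_continuum (U : Ultrafilter ℕ) (hU : addU U U = U)
    (hex : ∃ μ ∈ AU U, hmul μ μ = μ) :
    (∃ (μ : (ℕ → Bool) → (Bdd 𝕋 → ℝ)) (E : (ℕ → Bool) → Set 𝕋),
      (∀ r, μ r ∈ AU U ∧ hmul (μ r) (μ r) = μ r) ∧
      (∀ r s, mE (μ r) (E s) = if r = s then 1 else 0)) ∧
    ¬ IsClosed {μ : Bdd 𝕋 → ℝ | μ ∈ AU U ∧ hmul μ μ = μ} := by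
  obtain ⟨μ, hμ, hid⟩ := hex
  have hfamily : ∀ r, mapM (hr r) μ ∈ AU U ∧
      hmul (mapM (hr r) μ) (mapM (hr r) μ) = mapM (hr r) μ :=
    fun r => ⟨mapM_mem_AU (cnt_hr r) hμ, hmul_mapM_hr_self hU hμ hid r⟩
  have hsets := mE_mapM_hr_ESet hU hμ
  exact ⟨⟨_, ESet, hfamily, hsets⟩, not_isClosed_idempotents_AU hU hfamily hsets⟩
end

section
/- Let U be an idempotent ultrafilter on (ℕ,+) and let r ∈ 2^ℕ. If μ and ν are in 𝔸_U, then h_r(μˆν) = h_r(μ)ˆh_r(ν). -/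
open scoped Classical

/-! Every `ν ∈ 𝔸_U` is concentrated, for each `q > 0`, on the terms `t` with `q ∣ #(t)`,
because an idempotent ultrafilter contains every set `qℕ`. When `2^#(x) ∣ #(y)` we have
`x ≪ y`, so `h_r(xˆy) = h_r(x)ˆh_r(y)` for `ν`-almost every `y`; since `ν` is a positive
functional, the inner integrals of `h_r(μˆν)` and `h_r(μ)ˆh_r(ν)` then agree for every `x`. -/

section Bounded

variable {S T : Type*}

lemma val_liftBdd {g : S → ℝ} (h : ∃ M, ∀ s, |g s| ≤ M) : (liftBdd g).1 = g := by
  rw [show liftBdd g = ⟨g, h⟩ from dif_pos h]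

lemma val_liftBdd_comp (f : Bdd S) (g : T → S) :
    (liftBdd fun t => f.1 (g t)).1 = fun t => f.1 (g t) :=
  let ⟨M, hM⟩ := f.2
  val_liftBdd ⟨M, fun t => hM (g t)⟩

lemma val_indB (E : Set S) : (indB E).1 = fun s => if s ∈ E then 1 else 0 :=
  val_liftBdd ⟨1, fun s => by split_ifs <;> norm_num⟩

def Bdd.sub (f g : Bdd S) : Bdd S :=
  ⟨fun s => f.1 s - g.1 s,
    let ⟨M, hM⟩ := f.2
    let ⟨N, hN⟩ := g.2
    ⟨M + N, fun s => (abs_sub _ _).trans (add_le_add (hM s) (hN s))⟩⟩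

end Bounded

namespace PrSet

variable {S : Type*} {φ : Bdd S → ℝ}

lemma apply_eq_add_apply_sub (hφ : φ ∈ PrSet S) (f g : Bdd S) : φ f = φ g + φ (f.sub g) :=
  hφ.1 g (f.sub g) f fun s => by simp [Bdd.sub]

lemma apply_const (hφ : φ ∈ PrSet S) (c : ℝ) : φ (constB S c) = c := by
  rw [hφ.2.1 c (constB S 1) (constB S c) fun s => (mul_one c).symm, hφ.2.2.2, mul_one]

lemma apply_mono (hφ : φ ∈ PrSet S) {f g : Bdd S} (h : ∀ s, f.1 s ≤ g.1 s) : φ f ≤ φ g := by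
  have hd : 0 ≤ φ (g.sub f) := hφ.2.2.1 _ fun s => sub_nonneg.2 (h s)
  linarith [apply_eq_add_apply_sub hφ g f]

lemma abs_apply_le (hφ : φ ∈ PrSet S) {f : Bdd S} {M : ℝ} (h : ∀ s, |f.1 s| ≤ M) :
    |φ f| ≤ M := by
  have hup := apply_mono hφ (g := constB S M) fun s => (abs_le.1 (h s)).2
  have hlow := apply_mono hφ (f := constB S (-M)) fun s => (abs_le.1 (h s)).1
  rw [apply_const hφ] at hup hlow
  exact abs_le.2 ⟨hlow, hup⟩

lemma apply_indB_compl (hφ : φ ∈ PrSet S) (E : Set S) :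
    φ (indB Eᶜ) = 1 - φ (indB E) := by
  have h := hφ.1 (indB E) (indB Eᶜ) (constB S 1) fun s => by
    by_cases hs : s ∈ E <;> simp [val_indB, hs, constB]
  rw [hφ.2.2.2] at h
  linarith

lemma apply_le_of_eqOn (hφ : φ ∈ PrSet S) {E : Set S} (hE : φ (indB E) = 1)
    {f g : Bdd S} (hfg : Set.EqOn f.1 g.1 E) : φ f ≤ φ g := by
  obtain ⟨M, hM⟩ := (f.sub g).2
  let bound : Bdd S := ⟨fun s => M * (indB Eᶜ).1 s, |M|, fun s => by
    by_cases hs : s ∈ E <;> simp [val_indB, hs]⟩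
  have hbound : φ bound = 0 := by
    rw [hφ.2.1 M (indB Eᶜ) bound fun _ => rfl, apply_indB_compl hφ, hE, sub_self, mul_zero]
  have hle : φ (f.sub g) ≤ φ bound := apply_mono hφ fun s => by
    by_cases hs : s ∈ E
    · simp [bound, Bdd.sub, val_indB, hs, hfg hs]
    · simpa [bound, val_indB, hs] using (abs_le.1 (hM s)).2
  linarith [apply_eq_add_apply_sub hφ f g]

lemma apply_eq_of_eqOn (hφ : φ ∈ PrSet S) {E : Set S} (hE : φ (indB E) = 1)
    {f g : Bdd S} (hfg : Set.EqOn f.1 g.1 E) : φ f = φ g :=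
  (apply_le_of_eqOn hφ hE hfg).antisymm (apply_le_of_eqOn hφ hE hfg.symm)

end PrSet

lemma dvd_mem_of_addU_self_eq {U : Ultrafilter ℕ} (hU : addU U U = U) {q : ℕ} (hq : 0 < q) :
    {n | q ∣ n} ∈ U := by
  obtain ⟨j, hjq, hj⟩ : ∃ j ∈ Set.Iio q, {n | n % q = j} ∈ U := by
    rw [← Ultrafilter.finite_biUnion_mem_iff (Set.finite_Iio q)]
    exact Filter.univ_mem' fun n => Set.mem_biUnion (Nat.mod_lt n hq) rfl
  have hsum : {m | {n | (m + n) % q = j} ∈ U} ∈ U := by rw [← hU] at hj; exact hj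
  obtain ⟨m, hm, hmj⟩ := U.nonempty_of_mem (U.inter_mem hsum hj)
  obtain ⟨n, hmn, hnj⟩ := U.nonempty_of_mem (U.inter_mem hm hj)
  have hjj : j + j ≡ j + 0 [MOD q] := by
    change (m + n) % q = j at hmn
    rw [Nat.add_mod, hmj, hnj] at hmn
    rw [Nat.ModEq, hmn, add_zero, Nat.mod_eq_of_lt hjq]
  have hj0 : j = 0 := by
    simpa [Nat.ModEq, Nat.mod_eq_of_lt hjq] using Nat.ModEq.add_left_cancel' j hjj
  subst hj0
  exact Filter.mem_of_superset hj fun n hn => Nat.dvd_of_mod_eq_zero hn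

lemma Asets.apply_indB_cnt {m : ℕ} {ψ : Bdd 𝕋 → ℝ} (hψ : ψ ∈ Asets m) {A : Set ℕ}
    (hm : m ∈ A) : ψ (indB {t | cnt t ∈ A}) = 1 := by
  obtain ⟨F, w, hcnt, -, hw1, hval⟩ := hψ
  rw [hval, ← hw1]
  exact Finset.sum_congr rfl fun t ht => by simp [val_indB, hcnt t ht, hm]

lemma mem_of_isClosed_of_mem_AU {U : Ultrafilter ℕ} {ν : Bdd 𝕋 → ℝ} (hν : ν ∈ AU U)
    {C : Set (Bdd 𝕋 → ℝ)} (hC : IsClosed C) (hAC : {m | Asets m ⊆ C} ∈ U) : ν ∈ C := by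
  by_contra hνC
  obtain ⟨m, ⟨ψ, hψC, hψA⟩, hm⟩ :=
    U.nonempty_of_mem (U.inter_mem (hν.2 Cᶜ hC.isOpen_compl hνC) hAC)
  exact hψC (hm hψA)

lemma apply_indB_cnt_of_mem_AU {U : Ultrafilter ℕ} {ν : Bdd 𝕋 → ℝ} (hν : ν ∈ AU U)
    {A : Set ℕ} (hA : A ∈ U) : ν (indB {t | cnt t ∈ A}) = 1 :=
  mem_of_isClosed_of_mem_AU hν (C := {ψ | ψ (indB {t | cnt t ∈ A}) = 1})
    (isClosed_eq (continuous_apply _) continuous_const)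
    (Filter.mem_of_superset hA fun _ hm _ hψ => Asets.apply_indB_cnt hψ hm)

lemma hr_mul_of_dvd (r : ℕ → Bool) {x y : 𝕋} (hxy : 2 ^ cnt x ∣ cnt y) :
    hr r (x * y) = hr r x * hr r y :=
  if_pos ⟨cnt x, Nat.lt_two_pow_self, hxy⟩

theorem hr_multiplicative_general (U : Ultrafilter ℕ) (hU : addU U U = U) (r : ℕ → Bool)
    (μ ν : Bdd 𝕋 → ℝ) (hν : ν ∈ AU U) :
    hrM r (hmul μ ν) = hmul (hrM r μ) (hrM r ν) := by
  funext f
  obtain ⟨M, hM⟩ := f.2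
  have hinner : ∀ x, ν (liftBdd fun y => f.1 (hr r (x * y)))
      = ν (liftBdd fun y => f.1 (hr r x * hr r y)) := fun x =>
    PrSet.apply_eq_of_eqOn hν.1
      (apply_indB_cnt_of_mem_AU hν (dvd_mem_of_addU_self_eq hU (pow_pos two_pos (cnt x))))
      fun y hy => by simp only [val_liftBdd_comp, hr_mul_of_dvd r hy]
  have hbdd : ∃ M, ∀ x, |ν (liftBdd fun y => f.1 (x * hr r y))| ≤ M :=
    ⟨M, fun x => PrSet.abs_apply_le hν.1 fun y => by rw [val_liftBdd_comp]; exact hM _⟩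
  simp only [hrM, hmul, starM, val_liftBdd_comp, val_liftBdd hbdd, hinner]

/-- Claim 6.3: `h_r(μˆν) = h_r(μ)ˆh_r(ν)` for `μ, ν ∈ 𝔸_U`. -/
theorem hr_multiplicative (U : Ultrafilter ℕ) (hU : addU U U = U) (r : ℕ → Bool)
    (μ ν : Bdd 𝕋 → ℝ) (hμ : μ ∈ AU U) (hν : ν ∈ AU U) :
    hrM r (hmul μ ν) = hmul (hrM r μ) (hrM r ν) :=
  hr_multiplicative_general U hU r μ ν hν
end
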